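/- With notation as above, if t ≠ t_n^H then 1/(t − t_n^H) equals the sum of all entries of the inverse of the (n+1)×(n+1) matrix (t − ψ_H(|i−j|))_{0≤i,j≤n}. -/

import Mathlib

/-!
For a vector `x` of total sum zero the constant part `H 0 e^{-t}/t` of the integrand of
`ψ_H` drops out of `b_n^H(x, x)`, leaving `-∫ H(t)/(1 - e^{-t}) ∑ x_i x_j e^{-|i-j| t} dt`.
The inner sum is a quadratic form of the Kac–Murdock–Szegő matrix `(r^|i-j|)` with
`r = e^{-t} ∈ (0, 1)`, which is positive definite, so `b_n^H` is strictly negative definite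
on sum-zero vectors.

The hypotheses on `v` say that `vᵀ Ψ = q 𝟙ᵀ` for `Ψ = (ψ_H(|i-j|))` and `q = q_n^H(v)`,
hence `vᵀ (t J - Ψ) = (t - q) 𝟙ᵀ`. Negative definiteness on sum-zero vectors makes
`t J - Ψ` invertible when `t ≠ q`, and then `𝟙ᵀ (t J - Ψ)⁻¹ 𝟙 = vᵀ 𝟙 / (t - q) = 1 / (t - q)`.
-/

open MeasureTheory Set Finset

/-- The real-valued function `ψ_H`. -/
noncomputable def psiH (H : ℝ → ℝ) (s : ℝ) : ℝ :=
  ∫ t in Ioi (0 : ℝ),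
    (H 0 * Real.exp (-t) / t - H t * Real.exp (-(s * t)) / (1 - Real.exp (-t)))

/-- The symmetric bilinear form attached to `q_n^H`. -/
noncomputable def bH (H : ℝ → ℝ) (n : ℕ) (x y : Fin (n + 1) → ℝ) : ℝ :=
  ∑ i, ∑ j, x i * y j * psiH H |(i.1 : ℝ) - (j.1 : ℝ)|

/-- The quadratic form `q_n^H`. -/
noncomputable def qH (H : ℝ → ℝ) (n : ℕ) (x : Fin (n + 1) → ℝ) : ℝ :=
  bH H n x x

open Real Matrix

section
variable {R : Type*} [CommRing R]

def geomConv (r : R) (y : ℕ → R) (m : ℕ) : R :=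
  ∑ j ∈ range (m + 1), r ^ (m - j) * y j

theorem geomConv_succ (r : R) (y : ℕ → R) (m : ℕ) :
    geomConv r y (m + 1) = r * geomConv r y m + y (m + 1) := by
  rw [geomConv, sum_range_succ, geomConv, mul_sum, Nat.sub_self, pow_zero, one_mul]
  congr 1
  refine sum_congr rfl fun j hj => ?_
  rw [← mul_assoc, ← pow_succ', Nat.sub_add_comm (mem_range_succ_iff.mp hj)]

/-- Cholesky factorization of the Kac–Murdock–Szegő matrix `(r ^ |i - j|)`. -/
theorem sum_range_sum_range_mul_pow_dist (r : R) (y : ℕ → R) (N : ℕ) :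
    ∑ i ∈ range (N + 1), ∑ j ∈ range (N + 1), y i * y j * r ^ Nat.dist i j
      = geomConv r y N ^ 2 + (1 - r ^ 2) * ∑ i ∈ range N, geomConv r y i ^ 2 := by
  induction N with
  | zero => simp [geomConv, Nat.dist_self]; ring
  | succ N ih =>
    have hcross : ∑ i ∈ range (N + 1), y i * y (N + 1) * r ^ Nat.dist i (N + 1)
        = y (N + 1) * (r * geomConv r y N) := by
      rw [geomConv, mul_sum, mul_sum]
      refine sum_congr rfl fun i hi => ?_
      rw [Nat.dist_eq_sub_of_le (by have := mem_range.mp hi; omega),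
        Nat.sub_add_comm (mem_range_succ_iff.mp hi), pow_succ]
      ring
    have hcross' : ∑ j ∈ range (N + 1), y (N + 1) * y j * r ^ Nat.dist (N + 1) j
        = y (N + 1) * (r * geomConv r y N) := by
      rw [← hcross]
      exact sum_congr rfl fun j _ => by rw [Nat.dist_comm]; ring
    rw [sum_range_succ, sum_congr rfl fun i _ => sum_range_succ _ _, sum_add_distrib, ih,
      hcross, sum_range_succ, hcross', Nat.dist_self, sum_range_succ, geomConv_succ]
    ring

theorem eq_zero_of_geomConv_eq_zero {r : R} {y : ℕ → R} {N : ℕ}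
    (h : ∀ i ≤ N, geomConv r y i = 0) : ∀ i ≤ N, y i = 0 := by
  intro i hi
  cases i with
  | zero => simpa [geomConv] using h 0 hi
  | succ m =>
    have := geomConv_succ r y m
    rw [h (m + 1) hi, h m (by omega)] at this
    linear_combination -this
end

theorem sum_range_sum_range_mul_pow_dist_pos {r : ℝ} (hr : |r| < 1) {y : ℕ → ℝ} {N : ℕ}
    (hy : ∃ i ≤ N, y i ≠ 0) :
    0 < ∑ i ∈ range (N + 1), ∑ j ∈ range (N + 1), y i * y j * r ^ Nat.dist i j := by
  have hr2 : 0 < 1 - r ^ 2 := by rw [sub_pos, sq_lt_one_iff_abs_lt_one]; exact hr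
  have hW : 0 < ∑ i ∈ range (N + 1), geomConv r y i ^ 2 := by
    refine lt_of_le_of_ne (sum_nonneg fun i _ => sq_nonneg _) fun h => ?_
    obtain ⟨i, hi, hyi⟩ := hy
    refine hyi (eq_zero_of_geomConv_eq_zero (r := r) (fun k hk => ?_) i hi)
    exact pow_eq_zero_iff two_ne_zero |>.mp <|
      (sum_eq_zero_iff_of_nonneg fun _ _ => sq_nonneg _).mp h.symm k (mem_range_succ_iff.mpr hk)
  rw [sum_range_sum_range_mul_pow_dist, sum_range_succ] at *
  nlinarith [sq_nonneg (geomConv r y N), sq_nonneg r]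

section
variable {ι K : Type*} [Fintype ι] [DecidableEq ι] [Field K]

theorem vecMul_eq_const_of_dotProduct_mulVec_eq_zero {Ψ : Matrix ι ι K} {v : ι → K}
    (hv1 : ∑ i, v i = 1) (hv2 : ∀ y : ι → K, ∑ i, y i = 0 → v ⬝ᵥ Ψ *ᵥ y = 0) :
    v ᵥ* Ψ = fun _ => v ⬝ᵥ Ψ *ᵥ v := by
  funext i
  have hsum : ∑ j, (Pi.single i 1 - v : ι → K) j = 0 := by simp [sum_sub_distrib, hv1]
  have := hv2 _ hsum
  rw [mulVec_sub, dotProduct_sub, dotProduct_mulVec, dotProduct_single, mul_one] at this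
  exact sub_eq_zero.mp this

theorem isUnit_det_const_sub {Ψ : Matrix ι ι K} {v : ι → K} {q t : K}
    (hΨ : ∀ x : ι → K, ∑ i, x i = 0 → x ≠ 0 → x ⬝ᵥ Ψ *ᵥ x ≠ 0)
    (hv : v ᵥ* Ψ = fun _ => q) (hv1 : ∑ i, v i = 1) (ht : t ≠ q) :
    IsUnit (Matrix.of fun i j => t - Ψ i j).det := by
  refine isUnit_iff_ne_zero.mpr fun hdet => ?_
  obtain ⟨x, hx0, hx⟩ := exists_mulVec_eq_zero_iff.mpr hdet
  set a := ∑ i, x i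
  have hΨx : Ψ *ᵥ x = fun _ => t * a := by
    funext i
    have := congrFun hx i
    simp only [mulVec, dotProduct, of_apply, sub_mul, sum_sub_distrib, ← mul_sum,
      Pi.zero_apply] at this
    simp only [mulVec, dotProduct]
    linear_combination -this
  have ha : a = 0 := by
    have h1 : v ⬝ᵥ Ψ *ᵥ x = t * a := by
      simp [hΨx, dotProduct, ← sum_mul, hv1]
    have h2 : v ⬝ᵥ Ψ *ᵥ x = q * a := by
      rw [dotProduct_mulVec, hv]
      simp [dotProduct, ← mul_sum, a]
    have : (t - q) * a = 0 := by linear_combination h1.symm.trans h2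
    exact (mul_eq_zero.mp this).resolve_left (sub_ne_zero.mpr ht)
  apply hΨ x ha hx0
  simp [hΨx, ha, dotProduct]

theorem sum_sum_inv_const_sub {Ψ : Matrix ι ι K} {v : ι → K} {q t : K}
    (hΨ : ∀ x : ι → K, ∑ i, x i = 0 → x ≠ 0 → x ⬝ᵥ Ψ *ᵥ x ≠ 0)
    (hv : v ᵥ* Ψ = fun _ => q) (hv1 : ∑ i, v i = 1) (ht : t ≠ q) :
    ∑ i, ∑ j, (Matrix.of fun i j => t - Ψ i j)⁻¹ i j = 1 / (t - q) := by
  set M : Matrix ι ι K := Matrix.of fun i j => t - Ψ i j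
  have hvM : v ᵥ* M = (t - q) • fun _ => 1 := by
    funext j
    have := congrFun hv j
    simp only [vecMul, dotProduct, M, of_apply, mul_sub, sum_sub_distrib, ← sum_mul,
      hv1] at this ⊢
    simp [this]
  have hv' : v = (t - q) • ((fun _ => 1) ᵥ* M⁻¹) := by
    rw [← smul_vecMul, ← hvM, vecMul_vecMul,
      mul_nonsing_inv _ (isUnit_det_const_sub hΨ hv hv1 ht), vecMul_one]
  have hsum : ∑ i, ∑ j, M⁻¹ i j = ∑ j, ((fun _ => 1) ᵥ* M⁻¹) j := by
    simp only [vecMul, dotProduct, one_mul]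
    exact sum_comm
  have hv1' : (t - q) * ∑ j, ((fun _ => 1) ᵥ* M⁻¹) j = 1 := by
    rw [hv'] at hv1
    rwa [mul_sum]
  rw [hsum, eq_div_iff (sub_ne_zero.mpr ht), mul_comm, hv1']
end

noncomputable def psiHMatrix (H : ℝ → ℝ) (n : ℕ) : Matrix (Fin (n + 1)) (Fin (n + 1)) ℝ :=
  Matrix.of fun i j => psiH H |(i.1 : ℝ) - j.1|

theorem bH_eq_dotProduct_mulVec (H : ℝ → ℝ) (n : ℕ) (x y : Fin (n + 1) → ℝ) :
    bH H n x y = x ⬝ᵥ psiHMatrix H n *ᵥ y := by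
  simp only [bH, dotProduct, mulVec, psiHMatrix, of_apply, mul_sum]
  exact sum_congr rfl fun i _ => sum_congr rfl fun j _ => by ring

theorem one_sub_exp_neg_pos {τ : ℝ} (hτ : 0 < τ) : 0 < 1 - exp (-τ) := by
  simpa using hτ

theorem inv_one_sub_exp_neg_le {τ : ℝ} (hτ : 0 < τ) :
    (1 - exp (-τ))⁻¹ ≤ τ⁻¹ + 1 := by
  have h : (1 + τ) * exp (-τ) ≤ 1 := by
    rw [← le_div_iff₀ (exp_pos _), exp_neg, div_inv_eq_mul, one_mul, add_comm]
    exact add_one_le_exp τ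
  rw [inv_le_iff_one_le_mul₀' (one_sub_exp_neg_pos hτ)]
  field_simp
  nlinarith

theorem abs_exp_neg_div_sub_inv_one_sub_exp_neg_le {τ : ℝ} (hτ : 0 < τ) :
    |exp (-τ) / τ - (1 - exp (-τ))⁻¹| ≤ 2 := by
  have hlow : 1 - τ ≤ exp (-τ) := by linarith [add_one_le_exp (-τ)]
  have hup : exp (-τ) ≤ 1 := exp_le_one_iff.mpr (by linarith)
  have hge : τ⁻¹ ≤ (1 - exp (-τ))⁻¹ := inv_anti₀ (one_sub_exp_neg_pos hτ) (by linarith)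
  have hle := inv_one_sub_exp_neg_le hτ
  have h1 : exp (-τ) / τ ≤ τ⁻¹ := by
    rw [div_eq_mul_inv]; exact mul_le_of_le_one_left (by positivity) hup
  have h2 : τ⁻¹ - 1 ≤ exp (-τ) / τ := by
    rw [div_eq_mul_inv]; nlinarith [inv_pos.mpr hτ, mul_inv_cancel₀ hτ.ne']
  rw [abs_le]; constructor <;> linarith

noncomputable def psiHIntegrand (H : ℝ → ℝ) (s t : ℝ) : ℝ :=
  H 0 * exp (-t) / t - H t * exp (-(s * t)) / (1 - exp (-t))

theorem abs_psiHIntegrand_le {H : ℝ → ℝ} {s τ C : ℝ} (hs : 0 ≤ s) (hτ : 0 < τ)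
    (hH : |H τ - H 0| ≤ C * τ) :
    |psiHIntegrand H s τ| ≤ 2 * |H 0| + (|H 0| * s + C) * (1 + τ) := by
  have he0 : 0 < exp (-(s * τ)) := exp_pos _
  have he1 : exp (-(s * τ)) ≤ 1 := exp_le_one_iff.mpr (by nlinarith)
  have he2 : 1 - exp (-(s * τ)) ≤ s * τ := by linarith [add_one_le_exp (-(s * τ))]
  have hCτ : 0 ≤ C * τ := (abs_nonneg _).trans hH
  have hnum : |H 0 - H τ * exp (-(s * τ))| ≤ (|H 0| * s + C) * τ :=
    calc |H 0 - H τ * exp (-(s * τ))|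
        = |H 0 * (1 - exp (-(s * τ))) - (H τ - H 0) * exp (-(s * τ))| := by ring_nf
      _ ≤ |H 0| * (1 - exp (-(s * τ))) + |H τ - H 0| * exp (-(s * τ)) := by
        refine (abs_sub _ _).trans_eq ?_
        rw [abs_mul, abs_mul, abs_of_nonneg (sub_nonneg.mpr he1), abs_of_pos he0]
      _ ≤ |H 0| * (s * τ) + C * τ * 1 := by gcongr
      _ = (|H 0| * s + C) * τ := by ring
  have hden := one_sub_exp_neg_pos hτ
  calc |psiHIntegrand H s τ|
      = |H 0 * (exp (-τ) / τ - (1 - exp (-τ))⁻¹)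
          + (H 0 - H τ * exp (-(s * τ))) * (1 - exp (-τ))⁻¹| := by
        rw [psiHIntegrand]; congr 1; field_simp; ring
    _ ≤ |H 0| * 2 + (|H 0| * s + C) * τ * (τ⁻¹ + 1) := by
        refine (abs_add_le _ _).trans ?_
        rw [abs_mul, abs_mul, abs_of_pos (inv_pos.mpr hden)]
        exact add_le_add
          (mul_le_mul_of_nonneg_left (abs_exp_neg_div_sub_inv_one_sub_exp_neg_le hτ)
            (abs_nonneg _))
          (mul_le_mul hnum (inv_one_sub_exp_neg_le hτ) (inv_nonneg.mpr hden.le)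
            ((abs_nonneg _).trans hnum))
    _ = 2 * |H 0| + (|H 0| * s + C) * (1 + τ) := by field_simp

theorem psiHIntegrand_eq (H : ℝ → ℝ) (s : ℝ) :
    psiHIntegrand H s = fun t => H 0 * exp (-t) / t - H t * (exp (-(s * t)) / (1 - exp (-t))) := by
  funext t; rw [psiHIntegrand, mul_div_assoc (H t)]

theorem integrableOn_psiHIntegrand {H : ℝ → ℝ} (hInt : IntegrableOn H (Ici 0))
    (hbd : ∃ ε > (0 : ℝ), ∃ C : ℝ, ∀ t ∈ Ioo (0 : ℝ) ε, |(H t - H 0) / t| ≤ C)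
    {s : ℝ} (hs : 0 ≤ s) : IntegrableOn (psiHIntegrand H s) (Ioi 0) := by
  obtain ⟨ε, hε, C, hC⟩ := hbd
  have hquot : Measurable fun t : ℝ => exp (-(s * t)) / (1 - exp (-t)) := by fun_prop
  have hfirst : Measurable fun t : ℝ => H 0 * exp (-t) / t := by fun_prop
  set δ := ε / 2
  have hδ : 0 < δ := half_pos hε
  have hδε : δ < ε := half_lt_self hε
  rw [← Ioc_union_Ioi_eq_Ioi hδ.le]
  refine IntegrableOn.union ?_ ?_
  · have hmeas : AEStronglyMeasurable (psiHIntegrand H s) (volume.restrict (Ioc 0 δ)) := by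
      rw [psiHIntegrand_eq]
      exact hfirst.aestronglyMeasurable.sub
        ((hInt.mono_set fun _ h => h.1.le).aestronglyMeasurable.mul hquot.aestronglyMeasurable)
    refine Integrable.mono' (g := fun _ => 2 * |H 0| + (|H 0| * s + C) * (1 + δ))
      (integrableOn_const measure_Ioc_lt_top.ne) hmeas
      ((ae_restrict_iff' measurableSet_Ioc).mpr (Filter.Eventually.of_forall fun τ hτ => ?_))
    obtain ⟨hτ0, hτδ⟩ := hτ
    have hH : |H τ - H 0| ≤ C * τ := by
      have := hC τ ⟨hτ0, hτδ.trans_lt hδε⟩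
      rwa [abs_div, abs_of_pos hτ0, div_le_iff₀ hτ0] at this
    have hC0 : 0 ≤ C := nonneg_of_mul_nonneg_left ((abs_nonneg _).trans hH) hτ0
    rw [Real.norm_eq_abs]
    exact (abs_psiHIntegrand_le hs hτ0 hH).trans (by gcongr)
  · have hleft : IntegrableOn (fun t => H 0 * exp (-t) / t) (Ioi δ) := by
      refine Integrable.mono' ((exp_neg_integrableOn_Ioi δ one_pos).const_mul (|H 0| / δ))
        hfirst.aestronglyMeasurable
        ((ae_restrict_iff' measurableSet_Ioi).mpr
          (Filter.Eventually.of_forall fun τ (hτ : δ < τ) => ?_))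
      rw [Real.norm_eq_abs, abs_div, abs_mul, abs_of_pos (exp_pos _), abs_of_pos (hδ.trans hτ),
        neg_one_mul, mul_div_right_comm]
      gcongr
    have hright : IntegrableOn (fun t => H t * (exp (-(s * t)) / (1 - exp (-t)))) (Ioi δ) := by
      refine (hInt.mono_set fun _ (h : δ < _) => (hδ.trans h).le).mul_bdd
        hquot.aestronglyMeasurable (c := (1 - exp (-δ))⁻¹)
        ((ae_restrict_iff' measurableSet_Ioi).mpr
          (Filter.Eventually.of_forall fun τ (hτ : δ < τ) => ?_))
      have hden := one_sub_exp_neg_pos hδ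
      have hexp : exp (-(s * τ)) ≤ 1 := exp_le_one_iff.mpr (by nlinarith)
      rw [norm_div, Real.norm_of_nonneg (exp_pos _).le,
        Real.norm_of_nonneg (one_sub_exp_neg_pos (hδ.trans hτ)).le, ← one_div]
      gcongr
    rw [psiHIntegrand_eq]
    exact hleft.sub hright

theorem abs_natCast_sub_natCast (a b : ℕ) : |(a : ℝ) - b| = Nat.dist a b := by
  rcases le_total a b with h | h
  · rw [abs_sub_comm, Nat.dist_eq_sub_of_le h, Nat.cast_sub h, abs_of_nonneg (by simpa)]
  · rw [Nat.dist_eq_sub_of_le_right h, Nat.cast_sub h, abs_of_nonneg (by simpa)]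

theorem sum_sum_mul_exp_neg_abs_sub_mul_pos {n : ℕ} {y : Fin (n + 1) → ℝ} (hy : y ≠ 0)
    {τ : ℝ} (hτ : 0 < τ) :
    0 < ∑ i, ∑ j, y i * y j * exp (-(|(i.1 : ℝ) - j.1| * τ)) := by
  let Y : ℕ → ℝ := fun k => if h : k < n + 1 then y ⟨k, h⟩ else 0
  have hY (i : Fin (n + 1)) : Y i = y i := dif_pos i.2
  have hsum : ∑ i, ∑ j, y i * y j * exp (-(|(i.1 : ℝ) - j.1| * τ))
      = ∑ i ∈ range (n + 1), ∑ j ∈ range (n + 1), Y i * Y j * exp (-τ) ^ Nat.dist i j := by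
    rw [← Fin.sum_univ_eq_sum_range]
    refine sum_congr rfl fun i _ => ?_
    rw [← Fin.sum_univ_eq_sum_range (fun j => Y i * Y j * exp (-τ) ^ Nat.dist i j)]
    refine sum_congr rfl fun j _ => ?_
    rw [hY, hY, abs_natCast_sub_natCast, ← exp_nat_mul, mul_neg]
  rw [hsum]
  obtain ⟨i, hi⟩ := Function.ne_iff.mp hy
  refine sum_range_sum_range_mul_pow_dist_pos ?_ ⟨i, Nat.lt_succ_iff.mp i.2, by rwa [hY]⟩
  rw [abs_of_pos (exp_pos _)]
  exact exp_lt_one_iff.mpr (neg_lt_zero.mpr hτ)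

theorem sum_sum_mul_psiHIntegrand {n : ℕ} {y : Fin (n + 1) → ℝ} (hy : ∑ i, y i = 0)
    (H : ℝ → ℝ) (τ : ℝ) :
    ∑ i, ∑ j, y i * y j * psiHIntegrand H |(i.1 : ℝ) - j.1| τ
      = -(H τ / (1 - exp (-τ))
          * ∑ i, ∑ j, y i * y j * exp (-(|(i.1 : ℝ) - j.1| * τ))) := by
  have h : ∀ i j, y i * y j * psiHIntegrand H |(i.1 : ℝ) - j.1| τ
      = y i * y j * (H 0 * exp (-τ) / τ)
        - H τ / (1 - exp (-τ)) * (y i * y j * exp (-(|(i.1 : ℝ) - j.1| * τ))) := by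
    intro i j; rw [psiHIntegrand]; ring
  simp only [h, sum_sub_distrib, ← sum_mul, ← mul_sum, hy]
  ring

theorem bH_self_neg_of_sum_eq_zero {H : ℝ → ℝ} (hInt : IntegrableOn H (Ici 0))
    (hpos : ∀ t, 0 ≤ t → 0 ≤ H t)
    (hne : ¬ (∀ᵐ t ∂(volume.restrict (Ioi (0 : ℝ))), H t = 0))
    (hbd : ∃ ε > (0 : ℝ), ∃ C : ℝ, ∀ t ∈ Ioo (0 : ℝ) ε, |(H t - H 0) / t| ≤ C)
    {n : ℕ} {y : Fin (n + 1) → ℝ} (hy0 : ∑ i, y i = 0) (hy : y ≠ 0) :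
    bH H n y y < 0 := by
  let T : ℝ → ℝ := fun τ => ∑ i, ∑ j, y i * y j * psiHIntegrand H |(i.1 : ℝ) - j.1| τ
  have hint (i j : Fin (n + 1)) : IntegrableOn
      (fun τ => y i * y j * psiHIntegrand H |(i.1 : ℝ) - j.1| τ) (Ioi 0) :=
    (integrableOn_psiHIntegrand hInt hbd (abs_nonneg _)).const_mul _
  have hTint : IntegrableOn T (Ioi 0) :=
    integrable_finsetSum _ fun i _ => integrable_finsetSum _ fun j _ => hint i j
  have hbH : bH H n y y = ∫ τ in Ioi 0, T τ := by
    rw [integral_finsetSum _ fun i _ => integrable_finsetSum _ fun j _ => hint i j]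
    refine sum_congr rfl fun i _ => ?_
    rw [integral_finsetSum _ fun j _ => hint i j]
    exact sum_congr rfl fun j _ => (integral_const_mul _ _).symm
  have hT (τ : ℝ) (hτ : 0 < τ) : -T τ
      = H τ / (1 - exp (-τ)) * ∑ i, ∑ j, y i * y j * exp (-(|(i.1 : ℝ) - j.1| * τ)) := by
    rw [neg_eq_iff_eq_neg]
    exact sum_sum_mul_psiHIntegrand hy0 H τ
  have hT_nonneg : 0 ≤ᵐ[volume.restrict (Ioi 0)] fun τ => -T τ := by
    filter_upwards [ae_restrict_mem measurableSet_Ioi] with τ (hτ : 0 < τ)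
    rw [Pi.zero_apply, hT τ hτ]
    have := one_sub_exp_neg_pos hτ
    have := hpos τ hτ.le
    have := sum_sum_mul_exp_neg_abs_sub_mul_pos hy hτ
    positivity
  have hT_pos : 0 < ∫ τ in Ioi 0, -T τ := by
    refine (integral_nonneg_of_ae hT_nonneg).lt_of_ne fun h => hne ?_
    filter_upwards [(integral_eq_zero_iff_of_nonneg_ae hT_nonneg hTint.neg).mp h.symm,
      ae_restrict_mem measurableSet_Ioi] with τ hτ0 (hτ : 0 < τ)
    rw [Pi.zero_apply, hT τ hτ] at hτ0
    simpa [(one_sub_exp_neg_pos hτ).ne', (sum_sum_mul_exp_neg_abs_sub_mul_pos hy hτ).ne']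
      using hτ0
  rw [integral_neg] at hT_pos
  linarith

theorem stmt_11 (H : ℝ → ℝ)
    (hInt : IntegrableOn H (Ici 0))
    (hpos : ∀ t, 0 ≤ t → 0 ≤ H t)
    (hne : ¬ (∀ᵐ t ∂(volume.restrict (Ioi (0 : ℝ))), H t = 0))
    (hbd : ∃ ε > (0 : ℝ), ∃ C : ℝ, ∀ t ∈ Ioo (0 : ℝ) ε, |(H t - H 0) / t| ≤ C)
    (n : ℕ) (v : Fin (n + 1) → ℝ)
    (hv1 : ∑ i, v i = 1)
    (hv2 : ∀ y : Fin (n + 1) → ℝ, ∑ i, y i = 0 → bH H n v y = 0)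
    (t : ℝ) (ht : t ≠ qH H n v) :
    ∑ i, ∑ j,
        (Matrix.of fun i j : Fin (n + 1) => t - psiH H |(i.1 : ℝ) - (j.1 : ℝ)|)⁻¹ i j
      = 1 / (t - qH H n v) := by
  have hb := bH_eq_dotProduct_mulVec H n
  have hv : v ᵥ* psiHMatrix H n = fun _ => qH H n v := by
    rw [qH, hb]
    exact vecMul_eq_const_of_dotProduct_mulVec_eq_zero hv1 fun y hy => hb v y ▸ hv2 y hy
  have hΨ (x : Fin (n + 1) → ℝ) (hx : ∑ i, x i = 0) (hx0 : x ≠ 0) :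
      x ⬝ᵥ psiHMatrix H n *ᵥ x ≠ 0 := by
    rw [← hb]
    exact (bH_self_neg_of_sum_eq_zero hInt hpos hne hbd hx hx0).ne
  exact sum_sum_inv_const_sub hΨ hv hv1 ht
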